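/- For every i ∈ {1,…,N} and every j ∈ {1,…,K−1}, the cyclic interval I_{(j)_i} contains the common residues γ_{(j+1)_i}, …, γ_{(|𝒢|)_i}, so that |ℛ_{(j)_i}| ≥ ⌊(L−K)/2⌋ + 1; consequently (j)_i ∉ 𝒩. -/
import Mathlib


/-- `rmod Γ x` is the representative of `x` modulo `Γ` in `[0, Γ)` (for `Γ > 0`). -/
noncomputable def rmod (Γ x : ℝ) : ℝ := x - Γ * (⌊x / Γ⌋ : ℝ)

lemma rmod_add_int_mul (Γ : ℝ) (hΓ : 0 < Γ) (x : ℝ) (n : ℤ) :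
    rmod Γ (x + Γ * n) = rmod Γ x := by
  unfold rmod
  have h : (x + Γ * n) / Γ = x / Γ + n := by field_simp
  rw [h, Int.floor_add_intCast]
  push_cast
  ring

lemma rmod_eq_self {Γ x : ℝ} (h0 : 0 ≤ x) (h1 : x < Γ) : rmod Γ x = x := by
  have hΓ : 0 < Γ := lt_of_le_of_lt h0 h1
  have hf : ⌊x / Γ⌋ = 0 := by
    rw [Int.floor_eq_zero_iff]
    constructor
    · positivity
    · rw [div_lt_one hΓ]; exact h1
  simp [rmod, hf]

/-- For each `i` and each `j ∈ {1,…,K−1}` (here `0`-indexed: `j < K − 1`), the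
cyclic interval `I_{(j)_i}` contains all the later good common residues
`γ_{(j+1)_i}, …, γ_{(|𝒢|)_i}` of `X_i`, hence `|ℛ_{(j)_i}| ≥ ⌊(L−K)/2⌋ + 1`
and `(j)_i ∉ 𝒩`.  Here `σ i` enumerates the good labels of `X_i` in strictly
increasing order of error, and `idx i j` is the index of the corresponding
common residue among the sorted `γ`'s. -/
theorem first_good_indices_not_in_N
    (N L K : ℕ) (hN : 1 ≤ N) (hK : 1 ≤ K) (hKL : K ≤ L)
    (δ : ℝ) (hδ : 0 < δ) (Γ : ℝ) (hΓ : Γ = 4 * N * δ)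
    (G B : Finset (Fin L)) (hGB : G ∪ B = Finset.univ) (hGBdisj : Disjoint G B)
    (hB : B.card ≤ (L - K) / 2)
    (rc : Fin N → ℝ) (hrc : ∀ i, 0 ≤ rc i ∧ rc i < Γ)
    (Δ : Fin N → Fin L → ℝ) (hΔ : ∀ i, ∀ l ∈ G, |Δ i l| < δ)
    (hΔdist : ∀ i, ∀ l ∈ G, ∀ l' ∈ G, Δ i l = Δ i l' → l = l')
    (tilde : Fin N → Fin L → ℝ)
    (htilde : ∀ i l, tilde i l = rmod Γ (rc i + Δ i l))
    (hinj : Function.Injective (fun p : Fin N × Fin L => tilde p.1 p.2))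
    (γ : Fin (N * L) → ℝ) (hγmono : StrictMono γ)
    (hγrange : ∀ j, ∃ i l, γ j = tilde i l)
    (lbl : Fin (N * L) → Fin L) (hlbl : ∀ j, ∃ i, γ j = tilde i (lbl j))
    (R : Fin (N * L) → Finset (Fin L))
    (hR : ∀ j l, l ∈ R j ↔
      ∃ i, 0 < rmod Γ (tilde i l - γ j) ∧ rmod Γ (tilde i l - γ j) ≤ 2 * δ)
    (σ : Fin N → ℕ → Fin L)
    (hσmem : ∀ i j, j < G.card → σ i j ∈ G)
    (hσmono : ∀ i j k, j < k → k < G.card → Δ i (σ i j) < Δ i (σ i k))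
    (hσsurj : ∀ i, ∀ l ∈ G, ∃ j < G.card, σ i j = l)
    (idx : Fin N → ℕ → Fin (N * L))
    (hidx : ∀ i j, j < G.card → γ (idx i j) = tilde i (σ i j)) :
    ∀ i : Fin N, ∀ j : ℕ, j < K - 1 →
      (∀ k : ℕ, j < k → k < G.card →
        0 < rmod Γ (γ (idx i k) - γ (idx i j)) ∧
          rmod Γ (γ (idx i k) - γ (idx i j)) ≤ 2 * δ) ∧
      (L - K) / 2 + 1 ≤ (R (idx i j)).card ∧
      ¬((R (idx i j)).card ≤ (L - K) / 2 ∧ lbl (idx i j) ∉ R (idx i j)) := by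
  intro i j hj
  have hN' : (1 : ℝ) ≤ (N : ℝ) := by exact_mod_cast hN
  have hΓpos : 0 < Γ := by rw [hΓ]; nlinarith
  have hΓ4 : 4 * δ ≤ Γ := by rw [hΓ]; nlinarith
  have hcard : G.card + B.card = L := by
    have h := Finset.card_union_of_disjoint hGBdisj
    rw [hGB, Finset.card_univ, Fintype.card_fin] at h
    omega
  have hjG : j < G.card := by omega
  have main : ∀ k : ℕ, j < k → k < G.card →
      0 < rmod Γ (γ (idx i k) - γ (idx i j)) ∧
        rmod Γ (γ (idx i k) - γ (idx i j)) ≤ 2 * δ := by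
    intro k hjk hk
    rw [hidx i j hjG, hidx i k hk, htilde, htilde]
    set a := rc i + Δ i (σ i j) with ha
    set b := rc i + Δ i (σ i k) with hb
    have heq : rmod Γ b - rmod Γ a = (b - a) + Γ * ((⌊a / Γ⌋ - ⌊b / Γ⌋ : ℤ) : ℝ) := by
      unfold rmod; push_cast; ring
    rw [heq, rmod_add_int_mul Γ hΓpos]
    have hd0 : 0 < b - a := by
      have := hσmono i j k hjk hk
      simp only [ha, hb]
      linarith
    have hΔj := abs_lt.mp (hΔ i _ (hσmem i j hjG))
    have hΔk := abs_lt.mp (hΔ i _ (hσmem i k hk))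
    have hd2 : b - a < 2 * δ := by simp only [ha, hb]; linarith
    rw [rmod_eq_self hd0.le (by linarith)]
    exact ⟨hd0, by linarith⟩
  refine ⟨main, ?_, ?_⟩
  · have hsub : Finset.image (σ i) (Finset.Ico (j + 1) G.card) ⊆ R (idx i j) := by
      intro l hl
      simp only [Finset.mem_image, Finset.mem_Ico] at hl
      obtain ⟨k, ⟨hk1, hk2⟩, rfl⟩ := hl
      rw [hR]
      refine ⟨i, ?_⟩
      rw [← hidx i k hk2]
      exact main k (by omega) hk2
    have hinjon : Set.InjOn (σ i) (Finset.Ico (j + 1) G.card) := by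
      intro a ha b hb hab
      simp only [Finset.coe_Ico, Set.mem_Ico] at ha hb
      rcases lt_trichotomy a b with h | h | h
      · have := hσmono i a b h hb.2
        rw [hab] at this
        exact absurd this (lt_irrefl _)
      · exact h
      · have := hσmono i b a h ha.2
        rw [hab] at this
        exact absurd this (lt_irrefl _)
    have h1 : (Finset.image (σ i) (Finset.Ico (j + 1) G.card)).card ≤ (R (idx i j)).card :=
      Finset.card_le_card hsub
    rw [Finset.card_image_of_injOn hinjon, Nat.card_Ico] at h1
    omega
  · rintro ⟨h1, h2⟩
    have hsub : Finset.image (σ i) (Finset.Ico (j + 1) G.card) ⊆ R (idx i j) := by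
      intro l hl
      simp only [Finset.mem_image, Finset.mem_Ico] at hl
      obtain ⟨k, ⟨hk1, hk2⟩, rfl⟩ := hl
      rw [hR]
      refine ⟨i, ?_⟩
      rw [← hidx i k hk2]
      exact main k (by omega) hk2
    have hinjon : Set.InjOn (σ i) (Finset.Ico (j + 1) G.card) := by
      intro a ha b hb hab
      simp only [Finset.coe_Ico, Set.mem_Ico] at ha hb
      rcases lt_trichotomy a b with h | h | h
      · have := hσmono i a b h hb.2
        rw [hab] at this
        exact absurd this (lt_irrefl _)
      · exact h
      · have := hσmono i b a h ha.2
        rw [hab] at this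
        exact absurd this (lt_irrefl _)
    have hle : (Finset.image (σ i) (Finset.Ico (j + 1) G.card)).card ≤ (R (idx i j)).card :=
      Finset.card_le_card hsub
    rw [Finset.card_image_of_injOn hinjon, Nat.card_Ico] at hle
    omega
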